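/- Let A be a non-unital ℂ-algebra and suppose there exists a ℂ-linear map σ : A → A ⊗ A such that μ ∘ σ = id_A (where μ is multiplication) and σ is a map of right A-modules (σ(ab) = σ(a)·b where A ⊗ A is a right A-module via the second factor). Then the canonical map A ⊗_A A → A is surjective, and if additionally there is a right-A-linear map τ : ker(μ) → A ⊗ A ⊗ A splitting the bar differential, then A ⊗_A A → A is an isomorphism, i.e., A is quasi-unital. -/

import Mathlib

/-!
Any map `A ⊗_A A → A` lifting `μ` is onto as soon as `μ` is, which the section `σ` guarantees,
and it is injective as soon as `ker μ` lies in the image of the bar differential, which is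
exactly what the splitting `τ` provides.
-/

open TensorProduct LinearMap

variable (A : Type) [NonUnitalRing A] [Module ℂ A] [SMulCommClass ℂ A A]
  [IsScalarTower ℂ A A]

/-- The bar differential `A ⊗ A ⊗ A → A ⊗ A`: `(μ ⊗ id) − (id ⊗ μ)`. -/
noncomputable def barD : (A ⊗[ℂ] (A ⊗[ℂ] A)) →ₗ[ℂ] A ⊗[ℂ] A :=
  (rTensor A (mul' ℂ A)) ∘ₗ (TensorProduct.assoc ℂ A A A).symm.toLinearMap
    - lTensor A (mul' ℂ A)

/-- The right `A`-action on `A ⊗ A` via the second factor. -/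
noncomputable def ρ₂ (b : A) : A ⊗[ℂ] A →ₗ[ℂ] A ⊗[ℂ] A :=
  lTensor A (mulRight ℂ b)

/-- The right `A`-action on `A ⊗ A ⊗ A` via the last factor. -/
noncomputable def ρ₃ (b : A) : A ⊗[ℂ] (A ⊗[ℂ] A) →ₗ[ℂ] A ⊗[ℂ] (A ⊗[ℂ] A) :=
  lTensor A (lTensor A (mulRight ℂ b))

namespace Submodule

variable {R M N : Type*} [Ring R] [AddCommGroup M] [Module R M] [AddCommMonoid N] [Module R N]
  {p : Submodule R M} {f : (M ⧸ p) →ₗ[R] N} {g : M →ₗ[R] N}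

theorem surjective_of_comp_mkQ_eq (hf : f ∘ₗ p.mkQ = g) (hg : Function.Surjective g) :
    Function.Surjective f :=
  Function.Surjective.of_comp (g := p.mkQ) (by rwa [← coe_comp, hf])

theorem injective_of_comp_mkQ_eq (hf : f ∘ₗ p.mkQ = g) (hg : ker g ≤ p) :
    Function.Injective f := by
  refine (injective_iff_map_eq_zero f).2 fun z hz => ?_
  obtain ⟨y, rfl⟩ := p.mkQ_surjective z
  have hy : y ∈ ker g := by rw [← hf]; exact hz
  exact (Quotient.mk_eq_zero p).2 (hg hy)

end Submodule

theorem quasiUnital_of_sections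
    (σ : A →ₗ[ℂ] A ⊗[ℂ] A)
    (hσ₁ : (mul' ℂ A) ∘ₗ σ = LinearMap.id) :
    (∀ f : ((A ⊗[ℂ] A) ⧸ LinearMap.range (barD A)) →ₗ[ℂ] A,
      f ∘ₗ (LinearMap.range (barD A)).mkQ = mul' ℂ A → Function.Surjective f) ∧
    ((∃ τ : A ⊗[ℂ] A →ₗ[ℂ] A ⊗[ℂ] (A ⊗[ℂ] A),
        (∀ x ∈ LinearMap.ker (mul' ℂ A), barD A (τ x) = x) ∧
        (∀ x ∈ LinearMap.ker (mul' ℂ A), ∀ b : A, τ (ρ₂ A b x) = ρ₃ A b (τ x))) →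
      ∀ f : ((A ⊗[ℂ] A) ⧸ LinearMap.range (barD A)) →ₗ[ℂ] A,
        f ∘ₗ (LinearMap.range (barD A)).mkQ = mul' ℂ A → Function.Bijective f) := by
  have hμ : Function.Surjective (mul' ℂ A) := surjective_of_comp_eq_id σ _ hσ₁
  refine ⟨fun f hf => Submodule.surjective_of_comp_mkQ_eq hf hμ, ?_⟩
  rintro ⟨τ, hτ, -⟩ f hf
  exact ⟨Submodule.injective_of_comp_mkQ_eq hf fun x hx => ⟨τ x, hτ x hx⟩,
    Submodule.surjective_of_comp_mkQ_eq hf hμ⟩
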